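/- arXiv:1106.4696 — 4 statements merged into one kernel-verified Lean document; each statement's English description precedes it below -/
import Mathlib

section
/- Let F : [0,∞) → [0,∞) be continuous, let κ : (0,∞) → (0,∞) be nondecreasing, and let a : [0,∞) → (0,∞) be differentiable with a′(τ)/a(τ) ≥ −F(τ) + κ(a(τ)) for all τ ≥ 0. Define â(τ) = a(0)·exp(−∫₀^τ F(s) ds). If there exists M ≥ 0 such that ∫₀^τ (−F(s) + κ(â(s))) ds ≥ −M for all τ ≥ 0, then a(τ) ≥ a(0)·e^{−M} for all τ ≥ 0; in particular, a(τ) does not tend to 0 as τ → +∞. -/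
open Real Filter MeasureTheory

/-- ODE core of Proposition 4.3: irregularity for positive increasing κ. -/
theorem stmt_8 (F : ℝ → ℝ) (hFc : ContinuousOn F (Set.Ici 0))
    (hFpos : ∀ τ : ℝ, 0 ≤ τ → 0 ≤ F τ)
    (κ : ℝ → ℝ) (hκpos : ∀ u : ℝ, 0 < u → 0 < κ u)
    (hκmono : ∀ u v : ℝ, 0 < u → u ≤ v → κ u ≤ κ v)
    (a : ℝ → ℝ) (hapos : ∀ τ : ℝ, 0 ≤ τ → 0 < a τ)
    (hdiff : ∀ τ : ℝ, 0 ≤ τ → DifferentiableAt ℝ a τ)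
    (hineq : ∀ τ : ℝ, 0 ≤ τ → -F τ + κ (a τ) ≤ deriv a τ / a τ)
    (aHat : ℝ → ℝ)
    (haHat : ∀ τ : ℝ, aHat τ = a 0 * Real.exp (-(∫ s in (0:ℝ)..τ, F s)))
    (M : ℝ) (hM : 0 ≤ M)
    (hint : ∀ τ : ℝ, 0 ≤ τ → -M ≤ ∫ s in (0:ℝ)..τ, (-F s + κ (aHat s))) :
    (∀ τ : ℝ, 0 ≤ τ → a 0 * Real.exp (-M) ≤ a τ) ∧
    ¬ Tendsto a atTop (nhds 0) := by
  have ha0 : 0 < a 0 := hapos 0 le_rfl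
  set G : ℝ → ℝ := fun t => ∫ s in (0:ℝ)..t, F s with hG
  -- integrability of F on [0,t]
  have hFint : ∀ t : ℝ, 0 ≤ t → IntervalIntegrable F volume 0 t := by
    intro t ht
    apply ContinuousOn.intervalIntegrable
    apply hFc.mono
    rw [Set.uIcc_of_le ht]
    exact fun x hx => hx.1
  -- G is monotone on [0,∞)
  have hGmono : ∀ s t : ℝ, 0 ≤ s → s ≤ t → G s ≤ G t := by
    intro s t hs hst
    have hInt : G t - G s = ∫ x in s..t, F x := by
      exact intervalIntegral.integral_interval_sub_left (hFint t (hs.trans hst)) (hFint s hs)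
    have : 0 ≤ ∫ x in s..t, F x :=
      intervalIntegral.integral_nonneg hst (fun x hx => hFpos x (hs.trans hx.1))
    linarith
  have hG0 : G 0 = 0 := by simp [hG]
  have hGnonneg : ∀ t : ℝ, 0 ≤ t → 0 ≤ G t := fun t ht => hG0 ▸ hGmono 0 t le_rfl ht
  -- aHat positivity and antitonicity
  have haHatpos : ∀ t : ℝ, 0 < aHat t := by
    intro t; rw [haHat t]; positivity
  have haHatanti : ∀ s t : ℝ, 0 ≤ s → s ≤ t → aHat t ≤ aHat s := by
    intro s t hs hst
    rw [haHat s, haHat t]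
    have h := hGmono s t hs hst
    exact mul_le_mul_of_nonneg_left (Real.exp_le_exp.2 (by linarith)) ha0.le
  have haHatle : ∀ t : ℝ, 0 ≤ t → aHat t ≤ a 0 := by
    intro t ht
    rw [haHat t]
    calc a 0 * Real.exp (-G t) ≤ a 0 * 1 :=
          mul_le_mul_of_nonneg_left
            (Real.exp_le_one_iff.mpr (by simpa using hGnonneg t ht)) ha0.le
      _ = a 0 := mul_one _
  -- log of a has right derivative deriv a x / a x at positive times
  have hLderiv : ∀ x : ℝ, 0 ≤ x → HasDerivAt (fun t => Real.log (a t))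
      (deriv a x / a x) x := by
    intro x hx
    exact ((hdiff x hx).hasDerivAt).log (ne_of_gt (hapos x hx))
  have hLcont : ∀ τ : ℝ, 0 ≤ τ → ContinuousOn (fun t => Real.log (a t)) (Set.Icc 0 τ) := by
    intro τ hτ x hx
    exact ((hLderiv x hx.1).continuousAt).continuousWithinAt
  -- Step 1: a t ≥ aHat t for t ≥ 0
  have hstep1 : ∀ τ : ℝ, 0 ≤ τ → aHat τ ≤ a τ := by
    intro τ hτ
    have key : (∫ y in (0:ℝ)..τ, (-F y)) ≤ Real.log (a τ) - Real.log (a 0) := by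
      apply intervalIntegral.integral_le_sub_of_hasDeriv_right_of_le hτ (hLcont τ hτ)
        (g' := fun x => deriv a x / a x)
      · intro x hx
        exact (hLderiv x hx.1.le).hasDerivWithinAt
      · have hsub : Set.Icc (0:ℝ) τ ⊆ Set.Ici 0 := fun x hx => hx.1
        exact ((hFc.mono hsub).neg).integrableOn_compact isCompact_Icc
      · intro x hx
        have h1 := hineq x hx.1.le
        have h2 := hκpos (a x) (hapos x hx.1.le)
        linarith
    have hI : (∫ y in (0:ℝ)..τ, (-F y)) = -G τ := by
      simp [hG, intervalIntegral.integral_neg]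
    rw [hI] at key
    have : Real.log (aHat τ) ≤ Real.log (a τ) := by
      rw [haHat τ, Real.log_mul (ne_of_gt ha0) (ne_of_gt (Real.exp_pos _)),
        Real.log_exp]
      linarith
    calc aHat τ = Real.exp (Real.log (aHat τ)) := (Real.exp_log (haHatpos τ)).symm
      _ ≤ Real.exp (Real.log (a τ)) := Real.exp_le_exp.2 this
      _ = a τ := Real.exp_log (hapos τ hτ)
  -- Step 2: main bound
  have hmain : ∀ τ : ℝ, 0 ≤ τ → a 0 * Real.exp (-M) ≤ a τ := by
    intro τ hτ
    have hκint : IntegrableOn (fun s => κ (aHat s)) (Set.Icc 0 τ) volume := by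
      have hanti : AntitoneOn (fun s => κ (aHat s)) (Set.uIcc 0 τ) := by
        rw [Set.uIcc_of_le hτ]
        intro s hs t ht hst
        exact hκmono _ _ (haHatpos t) (haHatanti s t hs.1 hst)
      exact (intervalIntegrable_iff_integrableOn_Icc_of_le hτ).mp hanti.intervalIntegrable
    have hFint' : IntegrableOn (fun s => -F s) (Set.Icc 0 τ) volume :=
      ((hFc.mono (fun x hx => hx.1 : Set.Icc 0 τ ⊆ Set.Ici 0)).neg).integrableOn_compact
        isCompact_Icc
    have φint : IntegrableOn (fun s => -F s + κ (aHat s)) (Set.Icc 0 τ) volume :=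
      hFint'.add hκint
    have key : (∫ y in (0:ℝ)..τ, (-F y + κ (aHat y))) ≤
        Real.log (a τ) - Real.log (a 0) := by
      apply intervalIntegral.integral_le_sub_of_hasDeriv_right_of_le hτ (hLcont τ hτ)
        (g' := fun x => deriv a x / a x)
      · intro x hx
        exact (hLderiv x hx.1.le).hasDerivWithinAt
      · exact φint
      · intro x hx
        have h1 := hineq x hx.1.le
        have h2 : κ (aHat x) ≤ κ (a x) :=
          hκmono _ _ (haHatpos x) (hstep1 x hx.1.le)
        linarith
    have hlog : Real.log (a 0) - M ≤ Real.log (a τ) := by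
      have := hint τ hτ
      linarith
    calc a 0 * Real.exp (-M)
        = Real.exp (Real.log (a 0) - M) := by
          rw [Real.exp_sub, Real.exp_log ha0, Real.exp_neg, div_eq_mul_inv]
      _ ≤ Real.exp (Real.log (a τ)) := Real.exp_le_exp.2 hlog
      _ = a τ := Real.exp_log (hapos τ hτ)
  refine ⟨hmain, ?_⟩
  intro htend
  have hev : ∀ᶠ t in atTop, a 0 * Real.exp (-M) ≤ a t := by
    filter_upwards [eventually_ge_atTop (0:ℝ)] with t ht using hmain t ht
  have : a 0 * Real.exp (-M) ≤ 0 := ge_of_tendsto htend hev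
  have : 0 < a 0 * Real.exp (-M) := by positivity
  linarith
end

section
/- Define κ*(v) = |ln v|^{1/3}·exp(−(3√π·|ln v|)^{2/3}) for v ∈ (0,1) and â(τ) = exp(−(1/(3√π))·(ln τ)^{3/2}) for τ > 1. Then for every τ > 1: κ*(â(τ)) = (3√π)^{−1/3}·(ln τ)^{1/2}/τ. Moreover (3√π)^{−1/3} > 1/(2√π), so that −(1/(2√π))·(ln τ)^{1/2}/τ + κ*(â(τ)) ≥ 0 for all τ > 1, and hence ∫_e^∞ [−(1/(2√π))·(ln τ)^{1/2}/τ + κ*(â(τ))] dτ > −∞. -/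
open Real Filter MeasureTheory

/-- Computation behind Corollary 4.1: the critical nonlinearity on Petrovskii's parabola. -/
theorem stmt_9 (κ : ℝ → ℝ)
    (hκ : ∀ v : ℝ, 0 < v → v < 1 →
      κ v = |Real.log v| ^ ((1:ℝ)/3) *
        Real.exp (-(3 * Real.sqrt π * |Real.log v|) ^ ((2:ℝ)/3)))
    (aHat : ℝ → ℝ)
    (haHat : ∀ τ : ℝ, 1 < τ →
      aHat τ = Real.exp (-(1 / (3 * Real.sqrt π)) * (Real.log τ) ^ ((3:ℝ)/2))) :
    (∀ τ : ℝ, 1 < τ →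
      κ (aHat τ) = (3 * Real.sqrt π) ^ (-(1:ℝ)/3) * (Real.log τ) ^ ((1:ℝ)/2) / τ) ∧
    (1 / (2 * Real.sqrt π) < (3 * Real.sqrt π) ^ (-(1:ℝ)/3)) ∧
    (∀ τ : ℝ, 1 < τ →
      0 ≤ -(1 / (2 * Real.sqrt π)) * (Real.log τ) ^ ((1:ℝ)/2) / τ + κ (aHat τ)) ∧
    (∃ M : ℝ, ∀ T : ℝ, Real.exp 1 ≤ T →
      M ≤ ∫ τ in (Real.exp 1)..T,
        (-(1 / (2 * Real.sqrt π)) * (Real.log τ) ^ ((1:ℝ)/2) / τ + κ (aHat τ))) := by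
  have hs : (0:ℝ) < Real.sqrt π := Real.sqrt_pos.mpr Real.pi_pos
  have hs2 : Real.sqrt π ^ 2 = π := Real.sq_sqrt Real.pi_pos.le
  set s := Real.sqrt π with hsdef
  -- main computation
  have key : ∀ τ : ℝ, 1 < τ →
      κ (aHat τ) = (3 * s) ^ (-(1:ℝ)/3) * (Real.log τ) ^ ((1:ℝ)/2) / τ := by
    intro τ hτ
    have hL : 0 < Real.log τ := Real.log_pos hτ
    set L := Real.log τ with hLdef
    have hLp : 0 < L ^ ((3:ℝ)/2) := Real.rpow_pos_of_pos hL _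
    have hA := haHat τ hτ
    have harg : -(1 / (3 * s)) * L ^ ((3:ℝ)/2) < 0 := by
      have : 0 < 1 / (3 * s) * L ^ ((3:ℝ)/2) := by positivity
      linarith
    have h0 : 0 < aHat τ := by rw [hA]; exact Real.exp_pos _
    have h1 : aHat τ < 1 := by
      rw [hA]
      exact Real.exp_lt_one_iff.mpr harg
    have hlog : Real.log (aHat τ) = -(1 / (3 * s)) * L ^ ((3:ℝ)/2) := by
      rw [hA, Real.log_exp]
    have habs : |Real.log (aHat τ)| = 1 / (3 * s) * L ^ ((3:ℝ)/2) := by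
      rw [hlog, abs_of_neg harg]; ring
    rw [hκ _ h0 h1, habs]
    have hinner : 3 * s * (1 / (3 * s) * L ^ ((3:ℝ)/2)) = L ^ ((3:ℝ)/2) := by
      field_simp
    rw [hinner]
    have hexp : (L ^ ((3:ℝ)/2)) ^ ((2:ℝ)/3) = L := by
      rw [← Real.rpow_mul hL.le]; norm_num
    rw [hexp]
    have hfac : (1 / (3 * s) * L ^ ((3:ℝ)/2)) ^ ((1:ℝ)/3)
        = (3 * s) ^ (-(1:ℝ)/3) * L ^ ((1:ℝ)/2) := by
      rw [Real.mul_rpow (by positivity) hLp.le, ← Real.rpow_mul hL.le, one_div,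
        ← Real.rpow_neg_one (3 * s),
        ← Real.rpow_mul (by positivity : (0:ℝ) ≤ 3 * s)]
      norm_num
    rw [hfac, Real.exp_neg, Real.exp_log (by linarith : (0:ℝ) < τ)]
    ring
  have hineq : 1 / (2 * s) < (3 * s) ^ (-(1:ℝ)/3) := by
    have h3s : (0:ℝ) < 3 * s := by positivity
    have hcube : ((3 * s) ^ ((1:ℝ)/3)) ^ (3:ℕ) = 3 * s := by
      rw [← Real.rpow_natCast ((3 * s) ^ ((1:ℝ)/3)) 3, ← Real.rpow_mul h3s.le]
      norm_num
    have hlt : (3 * s) ^ ((1:ℝ)/3) < 2 * s := by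
      apply lt_of_pow_lt_pow_left₀ 3 (by positivity)
      rw [hcube]
      have hπ := Real.pi_gt_three
      nlinarith [hs2, hs]
    have h2 : 1 / (2 * s) < 1 / ((3 * s) ^ ((1:ℝ)/3)) :=
      one_div_lt_one_div_of_lt (Real.rpow_pos_of_pos h3s _) hlt
    calc 1 / (2 * s) < 1 / ((3 * s) ^ ((1:ℝ)/3)) := h2
      _ = (3 * s) ^ (-(1:ℝ)/3) := by
          rw [show (-(1:ℝ)/3) = -((1:ℝ)/3) by ring, Real.rpow_neg h3s.le, one_div]
  have hpt : ∀ τ : ℝ, 1 < τ →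
      0 ≤ -(1 / (2 * s)) * (Real.log τ) ^ ((1:ℝ)/2) / τ + κ (aHat τ) := by
    intro τ hτ
    rw [key τ hτ]
    have hL : 0 < Real.log τ := Real.log_pos hτ
    have hc : 0 ≤ (Real.log τ) ^ ((1:ℝ)/2) / τ :=
      div_nonneg (Real.rpow_nonneg hL.le _) (by linarith)
    have heq : -(1 / (2 * s)) * (Real.log τ) ^ ((1:ℝ)/2) / τ
        + (3 * s) ^ (-(1:ℝ)/3) * (Real.log τ) ^ ((1:ℝ)/2) / τ
        = ((3 * s) ^ (-(1:ℝ)/3) - 1 / (2 * s)) * ((Real.log τ) ^ ((1:ℝ)/2) / τ) := by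
      ring
    rw [heq]
    exact mul_nonneg (sub_nonneg.mpr hineq.le) hc
  refine ⟨key, hineq, hpt, 0, fun T hT => ?_⟩
  apply intervalIntegral.integral_nonneg hT
  intro u hu
  have he : (2.7182818283:ℝ) < Real.exp 1 := Real.exp_one_gt_d9
  have h1u : 1 < u := by
    have := hu.1
    linarith
  exact hpt u h1u
end

section
/- Fix integers m ≥ 1 and k ≥ 0, and define the polynomial P(y) = y^k + Σ_{j=1}^{⌊k/(2m)⌋} (1/j!)·(−1)^{mj}·(k!/(k−2mj)!)·y^{k−2mj}. Then for all y ∈ ℝ: (−1)^{m+1}·P^{(2m)}(y) − (1/(2m))·y·P′(y) = −(k/(2m))·P(y); that is, P is an eigenfunction of the adjoint operator B* = (−1)^{m+1}D^{2m} − (1/(2m))·y·D with eigenvalue −k/(2m). -/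
/-! Write `P = ∑_{j ≤ k/(2m)} a_j y^(e_j)` with `e_j = k - 2mj`. Differentiating `2m` times lowers
`y^(e_j)` to `y^(e_(j+1))`, and the coefficients satisfy
`(-1)^(m+1) a_j e_j(e_j - 1)⋯(e_j - 2m + 1) = -(j+1) a_(j+1)`, so `(-1)^(m+1) P^(2m) = -∑ j a_j y^(e_j)`.
The Euler operator `y D` multiplies `y^(e_j)` by `e_j`, and `-j - e_j/(2m) = -k/(2m)` for every `j`. -/

open Finset Nat

theorem iterate_deriv_sum_mul_pow (s : Finset ℕ) (c : ℕ → ℝ) (e : ℕ → ℕ) (n : ℕ) (y : ℝ) :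
    deriv^[n] (fun y => ∑ j ∈ s, c j * y ^ e j) y
      = ∑ j ∈ s, c j * (e j).descFactorial n * y ^ (e j - n) := by
  rw [← iteratedDeriv_eq_iterate, iteratedDeriv_fun_sum fun j _ => by fun_prop]
  simp only [iteratedDeriv_const_mul_field, iteratedDeriv_pow, mul_assoc]

theorem mul_descFactorial_one_mul_pow (e : ℕ) (y : ℝ) :
    y * (e.descFactorial 1 * y ^ (e - 1)) = e * y ^ e := by
  rcases e with _ | e
  · simp
  · rw [descFactorial_one, add_tsub_cancel_right, pow_succ]; ring

noncomputable def hermiteCoeff (m k j : ℕ) : ℝ :=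
  (1 / (j.factorial : ℝ)) * (-1 : ℝ) ^ (m*j) *
    ((k.factorial : ℝ) / (((k - 2*m*j).factorial : ℕ) : ℝ))

theorem hermiteCoeff_zero (m k : ℕ) : hermiteCoeff m k 0 = 1 := by
  simp [hermiteCoeff, k.factorial_pos.ne']

theorem neg_one_pow_mul_hermiteCoeff_mul_descFactorial {m k j : ℕ} (h : 2*m*(j+1) ≤ k) :
    (-1 : ℝ) ^ (m+1) * hermiteCoeff m k j * (k - 2*m*j).descFactorial (2*m)
      = -(j+1) * hermiteCoeff m k (j+1) := by
  have hfac : ((k - 2*m*(j+1)).factorial : ℝ) * (k - 2*m*j).descFactorial (2*m)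
      = (k - 2*m*j).factorial := by
    have := factorial_mul_descFactorial (show 2*m ≤ k - 2*m*j by rw [mul_add] at h; omega)
    rw [show k - 2*m*j - 2*m = k - 2*m*(j+1) by rw [mul_add]; omega] at this
    exact_mod_cast this
  have hdesc : ((k - 2*m*j).descFactorial (2*m) : ℝ) ≠ 0 := by
    intro h0; rw [h0, mul_zero] at hfac; exact (factorial_pos _).ne' (by exact_mod_cast hfac.symm)
  simp only [hermiteCoeff, ← hfac, factorial_succ, cast_mul, cast_succ, mul_add, mul_one, pow_add]
  field_simp

/-- The paper's `ψ*_k` in one dimension, without the normalising factor `1/√(k!)`. -/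
noncomputable def hermiteSum (m k : ℕ) (y : ℝ) : ℝ :=
  ∑ j ∈ range (k / (2*m) + 1), hermiteCoeff m k j * y ^ (k - 2*m*j)

theorem hermiteSum_eq (m k : ℕ) (y : ℝ) :
    hermiteSum m k y = y ^ k + ∑ j ∈ Icc 1 (k / (2*m)), hermiteCoeff m k j * y ^ (k - 2*m*j) := by
  rw [hermiteSum, sum_range_eq_add_Ico _ (succ_pos _), succ_eq_add_one, Ico_add_one_right_eq_Icc,
    hermiteCoeff_zero]
  simp

theorem two_mul_mul_le_of_le_div {m k j : ℕ} (hj : j ≤ k / (2*m)) : 2*m*j ≤ k :=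
  (Nat.mul_le_mul_left _ hj).trans (Nat.mul_div_le k _)

theorem neg_one_pow_mul_iterate_deriv_hermiteSum {m : ℕ} (hm : 0 < m) (k : ℕ) (y : ℝ) :
    (-1 : ℝ) ^ (m+1) * deriv^[2*m] (hermiteSum m k) y
      = ∑ j ∈ range (k / (2*m) + 1), -(j : ℝ) * hermiteCoeff m k j * y ^ (k - 2*m*j) := by
  set N := k / (2*m)
  -- the top exponent `e_N = k % (2m)` is below `2m`, so the top term dies
  have hlast : (k - 2*m*N).descFactorial (2*m) = 0 := by
    rw [descFactorial_eq_zero_iff_lt, ← Nat.mod_eq_sub_mul_div]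
    exact Nat.mod_lt _ (by omega)
  unfold hermiteSum
  rw [iterate_deriv_sum_mul_pow, mul_sum, sum_range_succ, hlast, sum_range_succ']
  simp only [cast_zero, mul_zero, zero_mul, add_zero, neg_zero]
  refine sum_congr rfl fun j hj => ?_
  have hj : 2*m*(j+1) ≤ k := two_mul_mul_le_of_le_div (mem_range.1 hj)
  rw [show k - 2*m*j - 2*m = k - 2*m*(j+1) by rw [mul_add]; omega]
  push_cast
  linear_combination y ^ (k - 2*m*(j+1)) * neg_one_pow_mul_hermiteCoeff_mul_descFactorial hj

theorem mul_deriv_hermiteSum (m k : ℕ) (y : ℝ) :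
    y * deriv (hermiteSum m k) y
      = ∑ j ∈ range (k / (2*m) + 1),
          ((k - 2*m*j : ℕ) : ℝ) * hermiteCoeff m k j * y ^ (k - 2*m*j) := by
  unfold hermiteSum
  rw [← Function.iterate_one deriv, iterate_deriv_sum_mul_pow, mul_sum]
  refine sum_congr rfl fun j _ => ?_
  linear_combination hermiteCoeff m k j * mul_descFactorial_one_mul_pow (k - 2*m*j) y

/-- Generalized Hermite polynomials are eigenfunctions of B* with eigenvalue −k/(2m). -/
theorem stmt_14 (m k : ℕ) (hm : 1 ≤ m) (P : ℝ → ℝ)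
    (hP : ∀ y : ℝ, P y = y ^ k + ∑ j ∈ Finset.Icc 1 (k / (2*m)),
      (1 / (j.factorial : ℝ)) * (-1 : ℝ) ^ (m*j) *
        ((k.factorial : ℝ) / (((k - 2*m*j).factorial : ℕ) : ℝ)) * y ^ (k - 2*m*j)) :
    ∀ y : ℝ, (-1 : ℝ) ^ (m+1) * (deriv^[2*m] P) y - (1 / (2*(m:ℝ))) * y * deriv P y
      = -((k:ℝ) / (2*(m:ℝ))) * P y := by
  obtain rfl : P = hermiteSum m k := funext fun y => (hP y).trans (hermiteSum_eq m k y).symm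
  intro y
  rw [mul_assoc _ y, neg_one_pow_mul_iterate_deriv_hermiteSum hm, mul_deriv_hermiteSum, hermiteSum,
    mul_sum, mul_sum, ← sum_sub_distrib]
  refine sum_congr rfl fun j hj => ?_
  rw [cast_sub (two_mul_mul_le_of_le_div (mem_range_succ_iff.1 hj))]
  field_simp
  push_cast
  ring
end

section
/- Fix an integer m ≥ 1 and set α = 2m/(2m−1), θ = π/(2(2m−1)), and let a = ((2m−1)/(2m)^α)·(−sin θ + i·cos θ) ∈ ℂ. Then (−1)^m·(α·a)^{2m−1} = 1/(2m), and Re(a) = −((2m−1)/(2m)^α)·sin θ < 0. -/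
/-!
With `n = 2m - 1`, the exponent `α = (n + 1)/n` is chosen so that `α` times the modulus
`n / (n + 1)^α` of `a` is `(n + 1)^(1 - α)`, whose `n`-th power is `(n + 1)⁻¹`. The phase of `a`
is `I * exp (θ * I)` with `n θ = π / 2`, so its `n`-th power is `I ^ (n + 1) = I ^ (2m) = (-1)^m`,
which cancels the sign `(-1)^m`. Since `0 < θ < π`, the real part `-|a| sin θ` is negative.
-/

open Real Complex

lemma neg_sin_add_I_mul_cos (θ : ℝ) :
    -(Real.sin θ : ℂ) + I * (Real.cos θ : ℂ) = I * exp (θ * I) := by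
  rw [exp_mul_I, ← ofReal_cos, ← ofReal_sin]
  ring_nf
  rw [I_sq]
  ring

lemma I_mul_exp_mul_I_pow {θ : ℝ} {n : ℕ} (h : n * θ = π / 2) :
    (I * exp (θ * I)) ^ n = I ^ (n + 1) := by
  rw [mul_pow, ← Complex.exp_nat_mul, ← mul_assoc, ← ofReal_natCast, ← ofReal_mul, h, ofReal_div,
    ofReal_ofNat, exp_pi_div_two_mul_I, pow_succ]

lemma add_one_div_mul_div_rpow_pow {n : ℕ} (hn : n ≠ 0) :
    ((n + 1) / n * (n / (n + 1) ^ (((n : ℝ) + 1) / n)) : ℝ) ^ n = 1 / (n + 1) := by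
  have hn' : (n : ℝ) ≠ 0 := Nat.cast_ne_zero.mpr hn
  have hx : (0 : ℝ) < n + 1 := by positivity
  have hbase : ((n + 1) / n * (n / (n + 1) ^ (((n : ℝ) + 1) / n)) : ℝ)
      = ((n : ℝ) + 1) ^ (1 - ((n : ℝ) + 1) / n) := by
    rw [rpow_sub hx, rpow_one]
    field_simp
  have hexp : (1 - ((n : ℝ) + 1) / n) * n = -1 := by
    field_simp
    ring
  rw [hbase, ← rpow_natCast, ← rpow_mul hx.le, hexp, rpow_neg_one, one_div]

lemma sin_pi_div_two_mul_pos {x : ℝ} (hx : 1 ≤ x) : 0 < Real.sin (π / (2 * x)) := by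
  apply Real.sin_pos_of_pos_of_lt_pi (div_pos pi_pos (by linarith))
  calc π / (2 * x) ≤ π / 2 := div_le_div_of_nonneg_left pi_pos.le two_pos (by linarith)
    _ < π := by linarith [pi_pos]

lemma ofReal_mul_ofReal_mul_neg_sin_add_I_mul_cos_pow {n : ℕ} (hn : n ≠ 0) :
    ((((n : ℝ) + 1) / n : ℝ) * ((((n : ℝ) / (n + 1) ^ (((n : ℝ) + 1) / n) : ℝ) : ℂ) *
      (-(Real.sin (π / (2 * n)) : ℂ) + I * (Real.cos (π / (2 * n)) : ℂ)))) ^ n =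
      ((1 / (n + 1) : ℝ) : ℂ) * I ^ (n + 1) := by
  have hθ : (n : ℝ) * (π / (2 * n)) = π / 2 := by field_simp [Nat.cast_ne_zero.mpr hn]
  rw [neg_sin_add_I_mul_cos, ← mul_assoc, ← ofReal_mul, mul_pow, ← ofReal_pow,
    add_one_div_mul_div_rpow_pow hn, I_mul_exp_mul_I_pow hθ]

/-- WKBJ root computation (i3)–(i4) for the rescaled poly-harmonic kernel. -/
theorem stmt_18 (m : ℕ) (hm : 1 ≤ m) (α θ : ℝ)
    (hα : α = (2*(m:ℝ)) / (2*(m:ℝ) - 1)) (hθ : θ = π / (2*(2*(m:ℝ) - 1)))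
    (a : ℂ)
    (ha : a = (((2*(m:ℝ) - 1) / (2*(m:ℝ)) ^ α : ℝ) : ℂ) *
      (-(Real.sin θ : ℂ) + Complex.I * (Real.cos θ : ℂ))) :
    (-1 : ℂ) ^ m * ((α : ℂ) * a) ^ (2*m - 1) = ((1 / (2*(m:ℝ)) : ℝ) : ℂ) ∧
    a.re = -((2*(m:ℝ) - 1) / (2*(m:ℝ)) ^ α) * Real.sin θ ∧
    a.re < 0 := by
  have hm' : (1 : ℝ) ≤ m := Nat.one_le_cast.mpr hm
  have hre : a.re = -((2*(m:ℝ) - 1) / (2*(m:ℝ)) ^ α) * Real.sin θ := by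
    simp [ha, -ofReal_sin, -ofReal_cos]
  refine ⟨?_, hre, ?_⟩
  · have hn : ((2 * m - 1 : ℕ) : ℝ) = 2 * m - 1 := by
      rw [Nat.cast_sub (by omega)]; push_cast; ring
    rw [← hn] at hα hθ ha
    rw [show 2 * (m : ℝ) = (2 * m - 1 : ℕ) + 1 by linarith] at hα ha ⊢
    subst hα hθ ha
    rw [ofReal_mul_ofReal_mul_neg_sin_add_I_mul_cos_pow (by omega),
      show 2 * m - 1 + 1 = 2 * m by omega, pow_mul, I_sq, mul_left_comm, ← mul_pow]
    norm_num
  · have hmod : 0 < (2 * (m : ℝ) - 1) / (2 * m) ^ α :=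
      div_pos (by linarith) (rpow_pos_of_pos (by linarith) _)
    have hsin : 0 < Real.sin θ := hθ ▸ sin_pi_div_two_mul_pos (by linarith)
    rw [hre]
    nlinarith
end
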